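/- arXiv:2509.22607 — 4 statements merged into one kernel-verified Lean document; each statement's English description precedes it below -/
import Mathlib

section
/- Kummer's confluent hypergeometric function satisfies $M(a, b, x) = O(x^{a-b} e^{x})$ as $x \to +\infty$, for fixed real $a > 0$ and $b > 0$. -/
/-!
All coefficients of `M(a, b, x)` are positive for `x > 0`, and Euler's limit formula for `Γ` gives
`(a)_m / (b)_m ~ Γ(b)/Γ(a) · m^(a-b)`, so `M(a, b, x) ≤ C ∑ (m+1)^s x^m/m!` with `s = a - b`.
To bound this moment of the exponential series, write `(m+1)^s = x^s q^s` with `q = (m+1)/x` and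
use `q^s ≤ q^k + q^(-k)` for an integer `k ≥ |s|`. The two integer moments are controlled by
`∑ m(m-1)⋯(m-k+1) x^m/m! = x^k e^x` together with `(m+1)^k ≤ (k+1)^k (m(m-1)⋯(m-k+1) + 1)`,
and by `(m+k)! ≤ k^k (m+1)^k m!`, which turns `∑ x^m/((m+1)^k m!)` into a tail of `x^(-k) e^x`.
-/

open MeasureTheory Set Real Filter Asymptotics

/-- Kummer's confluent hypergeometric function `M(a, b, z) = ∑ (a)_m/(b)_m z^m/m!`. -/
noncomputable def kummerM (a b z : ℂ) : ℂ :=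
  ∑' m : ℕ,
    ((∏ j ∈ Finset.range m, (a + j)) / (∏ j ∈ Finset.range m, (b + j))) * z ^ m
      / (m.factorial : ℂ)

open scoped Nat Topology
open Finset (range)

theorem summable_and_tsum_le_tsum_of_nonneg_of_le {ι : Type*} {f g : ι → ℝ}
    (hf : ∀ i, 0 ≤ f i) (hfg : ∀ i, f i ≤ g i) (hg : Summable g) :
    Summable f ∧ ∑' i, f i ≤ ∑' i, g i :=
  have hsf := Summable.of_nonneg_of_le hf hfg hg
  ⟨hsf, hsf.tsum_le_tsum hfg hg⟩

theorem Real.hasSum_pow_div_factorial (x : ℝ) : HasSum (fun n : ℕ => x ^ n / n !) (exp x) := by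
  rw [exp_eq_exp_ℝ]
  exact NormedSpace.expSeries_div_hasSum_exp x

theorem hasSum_descFactorial_mul_pow_div_factorial (x : ℝ) (k : ℕ) :
    HasSum (fun m : ℕ => (m.descFactorial k : ℝ) * x ^ m / m !) (x ^ k * exp x) := by
  rw [← hasSum_nat_add_iff' k]
  have hlow : ∑ i ∈ range k, (i.descFactorial k : ℝ) * x ^ i / i ! = 0 :=
    Finset.sum_eq_zero fun i hi => by
      simp [Nat.descFactorial_eq_zero_iff_lt.2 (Finset.mem_range.1 hi)]
  rw [hlow, sub_zero]
  have hshift (n : ℕ) :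
      ((n + k).descFactorial k : ℝ) * x ^ (n + k) / (n + k)! = x ^ k * (x ^ n / n !) := by
    have hfact : (n ! : ℝ) * (n + k).descFactorial k = (n + k)! := by
      exact_mod_cast
        Nat.add_sub_cancel n k ▸ Nat.factorial_mul_descFactorial (Nat.le_add_left k n)
    rw [← hfact, pow_add]
    field_simp
  simpa only [hshift] using (Real.hasSum_pow_div_factorial x).mul_left (x ^ k)

theorem succ_pow_le_pow_mul_descFactorial_add_one (m k : ℕ) :
    (m + 1) ^ k ≤ (k + 1) ^ k * (m.descFactorial k + 1) := by
  rcases lt_or_ge m k with hmk | hkm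
  · calc (m + 1) ^ k ≤ (k + 1) ^ k := Nat.pow_le_pow_left (by omega) k
      _ ≤ (k + 1) ^ k * (m.descFactorial k + 1) := Nat.le_mul_of_pos_right _ (by omega)
  · calc (m + 1) ^ k = ∏ _i ∈ range k, (m + 1) := by rw [Finset.prod_const, Finset.card_range]
      _ ≤ ∏ i ∈ range k, (k + 1) * (m - i) :=
          Finset.prod_le_prod' fun i hi => by
            have := Finset.mem_range.1 hi
            nlinarith [Nat.sub_add_cancel (show i ≤ m by omega)]
      _ = (k + 1) ^ k * m.descFactorial k := by
          rw [Finset.prod_mul_distrib, Finset.prod_const, Finset.card_range,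
            Nat.descFactorial_eq_prod_range]
      _ ≤ (k + 1) ^ k * (m.descFactorial k + 1) := Nat.mul_le_mul_left _ (Nat.le_succ _)

theorem factorial_add_le (m k : ℕ) : (m + k)! ≤ k ^ k * (m + 1) ^ k * m ! := by
  rcases k.eq_zero_or_pos with rfl | hk
  · simp
  calc (m + k)! = m ! * (m + 1).ascFactorial k := (Nat.factorial_mul_ascFactorial m k).symm
    _ ≤ m ! * (k * (m + 1)) ^ k :=
        Nat.mul_le_mul_left _ ((Nat.ascFactorial_le_pow_add m k).trans
          (Nat.pow_le_pow_left (by nlinarith) k))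
    _ = k ^ k * (m + 1) ^ k * m ! := by rw [mul_pow]; ring

theorem rpow_le_pow_add_inv_pow {q s : ℝ} (hq : 0 < q) {k : ℕ} (hk : |s| ≤ k) :
    q ^ s ≤ q ^ k + (q ^ k)⁻¹ := by
  rcases le_or_gt 1 q with h1q | hq1
  · have : q ^ s ≤ q ^ k := by
      rw [← rpow_natCast]; exact rpow_le_rpow_of_exponent_le h1q ((le_abs_self s).trans hk)
    linarith [inv_nonneg.2 (pow_nonneg hq.le k)]
  · have : q ^ s ≤ (q ^ k)⁻¹ := by
      rw [← rpow_natCast, ← rpow_neg hq.le]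
      exact rpow_le_rpow_of_exponent_ge hq hq1.le (by linarith [neg_abs_le s])
    linarith [pow_nonneg hq.le k]

section ExpSeriesMoments

variable {x : ℝ}

theorem summable_and_tsum_succ_pow_mul_pow_div_factorial_le (hx : 0 ≤ x) (k : ℕ) :
    Summable (fun m : ℕ => ((m : ℝ) + 1) ^ k * x ^ m / m !) ∧
      ∑' m : ℕ, ((m : ℝ) + 1) ^ k * x ^ m / m ! ≤ (k + 1) ^ k * (x ^ k + 1) * exp x := by
  have hdom : HasSum
      (fun m : ℕ => (k + 1 : ℝ) ^ k * ((m.descFactorial k : ℝ) * x ^ m / m ! + x ^ m / m !))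
      ((k + 1) ^ k * (x ^ k + 1) * exp x) := by
    have h := ((hasSum_descFactorial_mul_pow_div_factorial x k).add
      (Real.hasSum_pow_div_factorial x)).mul_left ((k + 1 : ℝ) ^ k)
    rwa [← add_one_mul, ← mul_assoc] at h
  have hle (m : ℕ) : ((m : ℝ) + 1) ^ k * x ^ m / m ! ≤
      (k + 1 : ℝ) ^ k * ((m.descFactorial k : ℝ) * x ^ m / m ! + x ^ m / m !) := by
    have hnat : ((m : ℝ) + 1) ^ k ≤ (k + 1 : ℝ) ^ k * (m.descFactorial k + 1) := by
      exact_mod_cast succ_pow_le_pow_mul_descFactorial_add_one m k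
    calc ((m : ℝ) + 1) ^ k * x ^ m / m ! = ((m : ℝ) + 1) ^ k * (x ^ m / m !) := by ring
      _ ≤ (k + 1 : ℝ) ^ k * (m.descFactorial k + 1) * (x ^ m / m !) := by gcongr
      _ = _ := by ring
  rw [← hdom.tsum_eq]
  exact summable_and_tsum_le_tsum_of_nonneg_of_le (fun m => by positivity) hle hdom.summable

theorem summable_and_tsum_pow_div_succ_pow_mul_factorial_le (hx : 0 < x) (k : ℕ) :
    Summable (fun m : ℕ => x ^ m / (((m : ℝ) + 1) ^ k * m !)) ∧
      ∑' m : ℕ, x ^ m / (((m : ℝ) + 1) ^ k * m !) ≤ k ^ k * exp x / x ^ k := by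
  have htail := (hasSum_nat_add_iff' k).2 (Real.hasSum_pow_div_factorial x)
  have hdom := htail.mul_left ((k : ℝ) ^ k / x ^ k)
  have hle (m : ℕ) : x ^ m / (((m : ℝ) + 1) ^ k * m !) ≤
      (k : ℝ) ^ k / x ^ k * (x ^ (m + k) / (m + k)!) := by
    have hfact : ((m + k)! : ℝ) ≤ k ^ k * ((m + 1) ^ k * m !) := by
      rw [← mul_assoc]; exact_mod_cast factorial_add_le m k
    rw [pow_add, div_mul_div_comm, div_le_div_iff₀ (by positivity) (by positivity)]
    calc x ^ m * (x ^ k * (m + k)!) ≤ x ^ m * (x ^ k * (k ^ k * ((m + 1) ^ k * m !))) := by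
          gcongr
      _ = _ := by ring
  obtain ⟨hsum, hbound⟩ :=
    summable_and_tsum_le_tsum_of_nonneg_of_le (fun m => by positivity) hle hdom.summable
  refine ⟨hsum, hbound.trans ?_⟩
  have hpartial : 0 ≤ ∑ i ∈ range k, x ^ i / i ! := Finset.sum_nonneg fun i _ => by positivity
  calc ∑' m : ℕ, (k : ℝ) ^ k / x ^ k * (x ^ (m + k) / (m + k)!)
      ≤ (k : ℝ) ^ k / x ^ k * exp x := by rw [hdom.tsum_eq]; gcongr; linarith
    _ = k ^ k * exp x / x ^ k := by ring

theorem succ_rpow_mul_pow_div_factorial_le (hx : 0 < x) {s : ℝ} {k : ℕ} (hk : |s| ≤ k)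
    (m : ℕ) : ((m : ℝ) + 1) ^ s * x ^ m / m ! ≤
      x ^ s * (((m : ℝ) + 1) ^ k * x ^ m / m ! / x ^ k +
        x ^ k * (x ^ m / (((m : ℝ) + 1) ^ k * m !))) := by
  set q := ((m : ℝ) + 1) / x
  have hq : 0 < q := by positivity
  have hsplit : ((m : ℝ) + 1) ^ s = x ^ s * q ^ s := by
    rw [← mul_rpow hx.le hq.le, mul_div_cancel₀ _ hx.ne']
  calc ((m : ℝ) + 1) ^ s * x ^ m / m ! = x ^ s * q ^ s * (x ^ m / m !) := by rw [hsplit]; ring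
    _ ≤ x ^ s * (q ^ k + (q ^ k)⁻¹) * (x ^ m / m !) := by
        gcongr; exact rpow_le_pow_add_inv_pow hq hk
    _ = _ := by
        simp only [q, div_pow]
        field_simp

theorem summable_succ_rpow_mul_pow_div_factorial (s : ℝ) (hx : 0 < x) :
    Summable (fun m : ℕ => ((m : ℝ) + 1) ^ s * x ^ m / m !) := by
  have hk := Nat.le_ceil |s|
  refine .of_nonneg_of_le (fun m => by positivity) (succ_rpow_mul_pow_div_factorial_le hx hk) ?_
  exact (((summable_and_tsum_succ_pow_mul_pow_div_factorial_le hx.le _).1.div_const _).add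
    ((summable_and_tsum_pow_div_succ_pow_mul_factorial_le hx _).1.mul_left _)).mul_left _

end ExpSeriesMoments

theorem isBigO_tsum_succ_rpow_mul_pow_div_factorial (s : ℝ) :
    (fun x : ℝ => ∑' m : ℕ, ((m : ℝ) + 1) ^ s * x ^ m / m !) =O[atTop]
      fun x => x ^ s * exp x := by
  set k := ⌈|s|⌉₊
  have hk : |s| ≤ k := Nat.le_ceil _
  refine IsBigO.of_bound (2 * (k + 1) ^ k + k ^ k) ?_
  filter_upwards [eventually_ge_atTop 1] with x hx
  have hx0 : 0 < x := by linarith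
  have hxk : 1 ≤ x ^ k := one_le_pow₀ hx
  obtain ⟨hpos, hpos_le⟩ := summable_and_tsum_succ_pow_mul_pow_div_factorial_le hx0.le k
  obtain ⟨hneg, hneg_le⟩ := summable_and_tsum_pow_div_succ_pow_mul_factorial_le hx0 k
  rw [norm_of_nonneg (tsum_nonneg fun m => by positivity), norm_of_nonneg (by positivity)]
  calc ∑' m : ℕ, ((m : ℝ) + 1) ^ s * x ^ m / m !
      ≤ ∑' m : ℕ, x ^ s * (((m : ℝ) + 1) ^ k * x ^ m / m ! / x ^ k +
          x ^ k * (x ^ m / (((m : ℝ) + 1) ^ k * m !))) :=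
        (summable_succ_rpow_mul_pow_div_factorial s hx0).tsum_le_tsum
          (succ_rpow_mul_pow_div_factorial_le hx0 hk)
          (((hpos.div_const _).add (hneg.mul_left _)).mul_left _)
    _ = x ^ s * ((∑' m : ℕ, ((m : ℝ) + 1) ^ k * x ^ m / m !) / x ^ k +
          x ^ k * ∑' m : ℕ, x ^ m / (((m : ℝ) + 1) ^ k * m !)) := by
        rw [tsum_mul_left, (hpos.div_const _).tsum_add (hneg.mul_left _), tsum_div_const,
          tsum_mul_left]
    _ ≤ x ^ s * ((k + 1) ^ k * (x ^ k + 1) * exp x / x ^ k +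
          x ^ k * (k ^ k * exp x / x ^ k)) := by gcongr
    _ ≤ x ^ s * ((k + 1) ^ k * (2 * x ^ k) * exp x / x ^ k +
          x ^ k * (k ^ k * exp x / x ^ k)) := by gcongr; linarith
    _ = (2 * (k + 1) ^ k + k ^ k) * (x ^ s * exp x) := by
        field_simp

theorem tendsto_prod_div_prod_div_rpow {a b : ℝ} (ha : 0 < a) (hb : 0 < b) :
    Tendsto (fun m : ℕ => (∏ j ∈ range m, (a + j)) / (∏ j ∈ range m, (b + j)) /
      ((m : ℝ) + 1) ^ (a - b)) atTop (𝓝 (Gamma b / Gamma a)) := by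
  rw [← tendsto_add_atTop_iff_nat 1]
  have hGamma :=
    (GammaSeq_tendsto_Gamma b).div (GammaSeq_tendsto_Gamma a) (Gamma_pos_of_pos ha).ne'
  have hcorr : Tendsto (fun n : ℕ => ((n : ℝ) / (n + 2)) ^ (a - b)) atTop (𝓝 1) := by
    simpa using
      (tendsto_natCast_div_add_atTop (2 : ℝ)).rpow_const (p := a - b) (.inl one_ne_zero)
  refine (mul_one (Gamma b / Gamma a) ▸ hGamma.mul hcorr).congr' ?_
  filter_upwards [eventually_ge_atTop 1] with n hn
  have hn0 : (0 : ℝ) < n := by exact_mod_cast hn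
  have hPa : 0 < ∏ j ∈ range (n + 1), (a + j) := Finset.prod_pos fun j _ => by positivity
  have hPb : 0 < ∏ j ∈ range (n + 1), (b + j) := Finset.prod_pos fun j _ => by positivity
  have hpow : (n : ℝ) ^ a = n ^ b * n ^ (a - b) := by rw [← rpow_add hn0]; ring_nf
  rw [Pi.div_apply, Real.GammaSeq, Real.GammaSeq, div_rpow hn0.le (by positivity), hpow,
    Nat.cast_add_one, add_assoc, one_add_one_eq_two]
  field_simp

theorem exists_prod_div_prod_le_mul_rpow {a b : ℝ} (ha : 0 < a) (hb : 0 < b) :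
    ∃ C, ∀ m : ℕ, (∏ j ∈ range m, (a + j)) / (∏ j ∈ range m, (b + j)) ≤
      C * ((m : ℝ) + 1) ^ (a - b) := by
  obtain ⟨C, hC⟩ := (tendsto_prod_div_prod_div_rpow ha hb).bddAbove_range
  exact ⟨C, fun m => (div_le_iff₀ (by positivity)).1 (hC ⟨m, rfl⟩)⟩

theorem kummerM_ofReal (a b x : ℝ) :
    kummerM a b x =
      ↑(∑' m : ℕ, (∏ j ∈ range m, (a + j)) / (∏ j ∈ range m, (b + j)) * x ^ m / m !) := by
  rw [kummerM, Complex.ofReal_tsum]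
  push_cast
  rfl

theorem kummerM_isBigO (a b : ℝ) (ha : 0 < a) (hb : 0 < b) :
    (fun x : ℝ => kummerM (a : ℂ) (b : ℂ) (x : ℂ))
      =O[atTop] fun x : ℝ => x ^ (a - b) * Real.exp x := by
  obtain ⟨C, hC⟩ := exists_prod_div_prod_le_mul_rpow ha hb
  refine IsBigO.trans ?_ (isBigO_tsum_succ_rpow_mul_pow_div_factorial (a - b))
  refine IsBigO.of_bound C ?_
  filter_upwards [eventually_gt_atTop 0] with x hx
  have hterm (m : ℕ) : (∏ j ∈ range m, (a + j)) / (∏ j ∈ range m, (b + j)) * x ^ m / m ! ≤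
      C * (((m : ℝ) + 1) ^ (a - b) * x ^ m / m !) := by
    rw [mul_div_assoc, mul_div_assoc, ← mul_assoc]
    gcongr
    exact hC m
  obtain ⟨-, hsum_le⟩ := summable_and_tsum_le_tsum_of_nonneg_of_le
    (fun m => by positivity) hterm ((summable_succ_rpow_mul_pow_div_factorial _ hx).mul_left C)
  rw [kummerM_ofReal, Complex.norm_real, norm_of_nonneg (tsum_nonneg fun m => by positivity),
    norm_of_nonneg (tsum_nonneg fun m => by positivity), ← tsum_mul_left]
  exact hsum_le
end

section
/- Let $a > 0$ and $b > 2a + 1/2$ be real, and let $\varepsilon > 0$. Then there is a constant $C = C(a,b,\varepsilon)$ such that for all real $x$ and all $y \geq 2$, $|M(a + ix, b, y)| \leq C \frac{e^y y^{a - b + \varepsilon}}{|\Gamma(a + ix)|}$. -/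
/-!
For `Re z = a > 0`, `Γ(z + m) = Γ(z) (z)_m` and `|Γ(z + m)| ≤ Γ(a + m)` give
`|(z)_m| ≤ Γ(a) (a)_m / |Γ(z)|`, so `|M(z, b, y)|` is at most `Γ(a) / |Γ(z)|` times the positive
series `∑ (a)_m / (b)_m y^m / m!`. Since `(a + j) / (b + j) = 1 - (b - a) / (b + j)` is at most
`((b + j) / (b + j + 1))^(b - a)`, the ratio telescopes to `(a)_m / (b)_m ≤ (b / (b + m))^(b - a)`.
Splitting the series at `N = ⌈y / 2⌉`, the terms with `m ≥ N` contribute at most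
`(2b / y)^(b - a) e^y`, while the first `N` terms are at most `2^N e^(y/2) ≤ 2 e^((1 + log 2) y / 2)`,
exponentially smaller than `e^y`.
-/

open MeasureTheory Set Real

open Finset
open scoped Nat

theorem Complex.norm_Gamma_le_Gamma_re {z : ℂ} (hz : 0 < z.re) :
    ‖Complex.Gamma z‖ ≤ Real.Gamma z.re := by
  rw [Complex.Gamma_eq_integral hz, Real.Gamma_eq_integral hz, Complex.GammaIntegral]
  refine (norm_integral_le_integral_norm _).trans_eq (setIntegral_congr_fun measurableSet_Ioi
    fun t ht => ?_)
  rw [norm_mul, Complex.norm_real, Real.norm_of_nonneg (exp_pos _).le,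
    Complex.norm_cpow_eq_rpow_re_of_pos ht]
  simp

theorem Complex.Gamma_add_nat_eq_mul_prod {z : ℂ} (hz : ∀ k : ℕ, z + k ≠ 0) (m : ℕ) :
    Complex.Gamma (z + m) = Complex.Gamma z * ∏ j ∈ range m, (z + j) := by
  induction m with
  | zero => simp
  | succ n ih =>
    rw [Nat.cast_succ, ← add_assoc, Complex.Gamma_add_one _ (hz n), ih, prod_range_succ]
    ring

theorem Real.Gamma_add_nat_eq_mul_prod {a : ℝ} (ha : 0 < a) (m : ℕ) :
    Real.Gamma (a + m) = Real.Gamma a * ∏ j ∈ range m, (a + j) := by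
  have hne : ∀ k : ℕ, (a : ℂ) + k ≠ 0 := fun k => by exact_mod_cast (by positivity : a + k ≠ 0)
  have h := Complex.Gamma_add_nat_eq_mul_prod hne m
  rw [← Complex.ofReal_natCast, ← Complex.ofReal_add, Complex.Gamma_ofReal, Complex.Gamma_ofReal]
    at h
  exact_mod_cast h

theorem norm_prod_add_nat_le {z : ℂ} (hz : 0 < z.re) (m : ℕ) :
    ‖Complex.Gamma z‖ * ‖∏ j ∈ range m, (z + j)‖
      ≤ Real.Gamma z.re * ∏ j ∈ range m, (z.re + j) := by
  have hne : ∀ k : ℕ, z + k ≠ 0 := fun k h => by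
    have := congrArg Complex.re h
    simp only [Complex.add_re, Complex.natCast_re, Complex.zero_re] at this
    linarith [(by positivity : 0 < z.re + k)]
  have hre : (z + m).re = z.re + m := by simp
  rw [← norm_mul, ← Complex.Gamma_add_nat_eq_mul_prod hne, ← Real.Gamma_add_nat_eq_mul_prod hz,
    ← hre]
  exact Complex.norm_Gamma_le_Gamma_re (hre ▸ by positivity)

/-- The ratio `(a)_m / (b)_m` of Pochhammer symbols. -/
noncomputable def pochhammerRatio (a b : ℝ) (m : ℕ) : ℝ := ∏ j ∈ range m, (a + j) / (b + j)

theorem pochhammerRatio_succ (a b : ℝ) (m : ℕ) :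
    pochhammerRatio a b (m + 1) = pochhammerRatio a b m * ((a + m) / (b + m)) :=
  prod_range_succ _ _

theorem pochhammerRatio_nonneg {a b : ℝ} (ha : 0 ≤ a) (hb : 0 ≤ b) (m : ℕ) :
    0 ≤ pochhammerRatio a b m :=
  prod_nonneg fun _ _ => by positivity

theorem pochhammerRatio_antitone {a b : ℝ} (ha : 0 ≤ a) (hab : a ≤ b) :
    Antitone (pochhammerRatio a b) := by
  refine antitone_nat_of_succ_le fun m => ?_
  rw [pochhammerRatio_succ]
  exact mul_le_of_le_one_right (pochhammerRatio_nonneg ha (ha.trans hab) m)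
    (div_le_one_of_le₀ (by linarith) (by linarith [(m.cast_nonneg : (0 : ℝ) ≤ m)]))

theorem pochhammerRatio_le_one {a b : ℝ} (ha : 0 ≤ a) (hab : a ≤ b) (m : ℕ) :
    pochhammerRatio a b m ≤ 1 :=
  pochhammerRatio_antitone ha hab (Nat.zero_le m)

theorem sub_div_le_div_add_one_rpow {B s : ℝ} (hB : 0 < B) (hs : 0 ≤ s) :
    (B - s) / B ≤ (B / (B + 1)) ^ s := by
  have hlog : -B⁻¹ ≤ log (B / (B + 1)) := by
    have := one_sub_inv_le_log_of_pos (by positivity : 0 < B / (B + 1))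
    rwa [inv_div, add_div, div_self hB.ne', one_div, sub_add_cancel_left] at this
  calc (B - s) / B = s * -B⁻¹ + 1 := by field_simp; ring
    _ ≤ exp (s * -B⁻¹) := add_one_le_exp _
    _ ≤ exp (log (B / (B + 1)) * s) := exp_le_exp.2 (by nlinarith)
    _ = (B / (B + 1)) ^ s := (rpow_def_of_pos (by positivity) s).symm

theorem pochhammerRatio_le_rpow {a b : ℝ} (ha : 0 < a) (hab : a ≤ b) (m : ℕ) :
    pochhammerRatio a b m ≤ (b / (b + m)) ^ (b - a) := by
  have hb : 0 < b := ha.trans_le hab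
  induction m with
  | zero => simp [pochhammerRatio, div_self hb.ne']
  | succ m ih =>
    have hbm : 0 < b + m := by positivity
    have hstep : (a + m) / (b + m) ≤ ((b + m) / (b + m + 1)) ^ (b - a) := by
      convert sub_div_le_div_add_one_rpow hbm (sub_nonneg.2 hab) using 2
      ring
    calc pochhammerRatio a b (m + 1) = pochhammerRatio a b m * ((a + m) / (b + m)) :=
          pochhammerRatio_succ a b m
      _ ≤ (b / (b + m)) ^ (b - a) * ((b + m) / (b + m + 1)) ^ (b - a) :=
          mul_le_mul ih hstep (by positivity) (by positivity)
      _ = (b / (b + (m + 1 : ℕ))) ^ (b - a) := by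
          rw [← mul_rpow (by positivity) (by positivity)]
          congr 1
          push_cast
          field_simp
          ring

theorem summable_pochhammerRatio_mul_pow_div_factorial {a b y : ℝ} (ha : 0 ≤ a) (hab : a ≤ b)
    (hy : 0 ≤ y) : Summable fun m => pochhammerRatio a b m * (y ^ m / m !) :=
  (summable_pow_div_factorial y).of_nonneg_of_le
    (fun m => mul_nonneg (pochhammerRatio_nonneg ha (ha.trans hab) m) (by positivity))
    fun m => mul_le_of_le_one_left (by positivity) (pochhammerRatio_le_one ha hab m)

theorem tsum_pochhammerRatio_mul_le {a b y : ℝ} (ha : 0 ≤ a) (hab : a ≤ b) (hy : 0 ≤ y) (N : ℕ) :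
    ∑' m, pochhammerRatio a b m * (y ^ m / m !)
      ≤ ∑ m ∈ range N, y ^ m / m ! + pochhammerRatio a b N * exp y := by
  have hu : ∀ m : ℕ, 0 ≤ y ^ m / m ! := fun m => by positivity
  have hsum := summable_pochhammerRatio_mul_pow_div_factorial ha hab hy
  rw [← hsum.sum_add_tsum_nat_add N]
  gcongr with m
  · exact mul_le_of_le_one_left (hu m) (pochhammerRatio_le_one ha hab m)
  · calc ∑' m, pochhammerRatio a b (m + N) * (y ^ (m + N) / (m + N)!)
        ≤ ∑' m, pochhammerRatio a b N * (y ^ (m + N) / (m + N)!) :=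
          ((summable_nat_add_iff N).2 hsum).tsum_le_tsum
            (fun m => mul_le_mul_of_nonneg_right
              (pochhammerRatio_antitone ha hab (Nat.le_add_left N m)) (hu _))
            (((summable_nat_add_iff N).2 (summable_pow_div_factorial y)).mul_left _)
      _ ≤ pochhammerRatio a b N * exp y := by
          rw [tsum_mul_left, exp_eq_exp_ℝ, NormedSpace.exp_eq_tsum_div]
          exact mul_le_mul_of_nonneg_left
            (tsum_comp_le_tsum_of_inj (summable_pow_div_factorial y) hu (add_left_injective N))
            (pochhammerRatio_nonneg ha (ha.trans hab) N)

theorem sum_range_pow_div_factorial_le {y t : ℝ} (hy : 0 ≤ y) (ht : 0 < t) (ht1 : t ≤ 1)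
    (N : ℕ) : ∑ m ∈ range N, y ^ m / m ! ≤ exp (t * y) / t ^ N := by
  calc ∑ m ∈ range N, y ^ m / m ! ≤ ∑ m ∈ range N, (t * y) ^ m / m ! / t ^ N := by
        refine sum_le_sum fun m hm => ?_
        calc y ^ m / m ! = (t * y) ^ m / m ! / t ^ m := by rw [mul_pow]; field_simp
          _ ≤ (t * y) ^ m / m ! / t ^ N := div_le_div_of_nonneg_left (by positivity)
              (by positivity) (pow_le_pow_of_le_one ht.le ht1 (mem_range.1 hm).le)
    _ ≤ exp (t * y) / t ^ N := by
        rw [← sum_div]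
        gcongr
        exact sum_le_exp_of_nonneg (by positivity) N

theorem sum_range_ceil_half_pow_div_factorial_le {y : ℝ} (hy : 0 ≤ y) :
    ∑ m ∈ range ⌈y / 2⌉₊, y ^ m / m ! ≤ 2 * exp y * exp (-((1 - log 2) / 2 * y)) := by
  have hN : (⌈y / 2⌉₊ : ℝ) < y / 2 + 1 := Nat.ceil_lt_add_one (by positivity)
  calc ∑ m ∈ range ⌈y / 2⌉₊, y ^ m / m ! ≤ exp (2⁻¹ * y) / 2⁻¹ ^ ⌈y / 2⌉₊ :=
        sum_range_pow_div_factorial_le hy (by norm_num) (by norm_num) _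
    _ = exp (y / 2 + ⌈y / 2⌉₊ * log 2) := by
        rw [inv_pow, div_inv_eq_mul, exp_add, exp_nat_mul, exp_log two_pos, inv_mul_eq_div]
    _ ≤ exp (y / 2 + (y / 2 + 1) * log 2) := by gcongr
    _ = 2 * exp y * exp (-((1 - log 2) / 2 * y)) := by
        rw [show 2 * exp y * exp (-((1 - log 2) / 2 * y)) = exp (log 2 + y + -((1 - log 2) / 2 * y))
          by rw [exp_add, exp_add, exp_log two_pos]]
        congr 1
        ring

theorem exists_rpow_le_mul_exp (s : ℝ) {c : ℝ} (hc : 0 < c) :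
    ∃ K > 0, ∀ y ≥ 1, y ^ s ≤ K * exp (c * y) := by
  refine ⟨(⌈s⌉₊)! / c ^ ⌈s⌉₊, ?_, fun y hy => ?_⟩
  · positivity
  calc y ^ s ≤ y ^ (⌈s⌉₊ : ℝ) := rpow_le_rpow_of_exponent_le hy (Nat.le_ceil s)
    _ = (c * y) ^ ⌈s⌉₊ / (⌈s⌉₊)! * ((⌈s⌉₊)! / c ^ ⌈s⌉₊) := by
        rw [rpow_natCast, mul_pow]; field_simp
    _ ≤ exp (c * y) * ((⌈s⌉₊)! / c ^ ⌈s⌉₊) := by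
        gcongr
        exact pow_div_factorial_le_exp _ (by positivity) _
    _ = _ := mul_comm _ _

theorem exists_tsum_pochhammerRatio_mul_le {a b : ℝ} (ha : 0 < a) (hab : a ≤ b) :
    ∃ C > 0, ∀ y ≥ 1,
      ∑' m, pochhammerRatio a b m * (y ^ m / m !) ≤ C * exp y * y ^ (a - b) := by
  set c := (1 - log 2) / 2 with hc_def
  have hc : 0 < c := by linarith [log_two_lt_d9]
  obtain ⟨K, hK, hyK⟩ := exists_rpow_le_mul_exp (b - a) hc
  have hb : 0 < b := ha.trans_le hab
  refine ⟨2 * K + (2 * b) ^ (b - a), by positivity, fun y hy => ?_⟩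
  have hy0 : 0 < y := by linarith
  set N := ⌈y / 2⌉₊
  have hN : y / 2 ≤ N := Nat.le_ceil _
  have hdecay : exp (-(c * y)) ≤ K * y ^ (a - b) := by
    rw [show a - b = -(b - a) by ring, rpow_neg hy0.le, ← div_eq_mul_inv,
      le_div_iff₀ (by positivity)]
    calc exp (-(c * y)) * y ^ (b - a) ≤ exp (-(c * y)) * (K * exp (c * y)) := by
          gcongr; exact hyK y hy
      _ = K := by rw [mul_left_comm, ← exp_add, neg_add_cancel, exp_zero, mul_one]
  have head : ∑ m ∈ range N, y ^ m / m ! ≤ 2 * K * exp y * y ^ (a - b) := by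
    calc ∑ m ∈ range N, y ^ m / m ! ≤ 2 * exp y * exp (-(c * y)) :=
          sum_range_ceil_half_pow_div_factorial_le hy0.le
      _ ≤ 2 * exp y * (K * y ^ (a - b)) := by gcongr
      _ = 2 * K * exp y * y ^ (a - b) := by ring
  have tail : pochhammerRatio a b N * exp y ≤ (2 * b) ^ (b - a) * exp y * y ^ (a - b) := by
    calc pochhammerRatio a b N * exp y ≤ (b / (b + N)) ^ (b - a) * exp y := by
          gcongr; exact pochhammerRatio_le_rpow ha hab N
      _ ≤ (2 * b / y) ^ (b - a) * exp y := by
          gcongr ?_ ^ _ * _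
          rw [div_le_div_iff₀ (by positivity) hy0]
          nlinarith
      _ = (2 * b) ^ (b - a) * exp y * y ^ (a - b) := by
          rw [div_rpow (by positivity) hy0.le, show a - b = -(b - a) by ring, rpow_neg hy0.le]
          ring
  calc ∑' m, pochhammerRatio a b m * (y ^ m / m !)
      ≤ ∑ m ∈ range N, y ^ m / m ! + pochhammerRatio a b N * exp y :=
        tsum_pochhammerRatio_mul_le ha.le hab hy0.le N
    _ ≤ 2 * K * exp y * y ^ (a - b) + (2 * b) ^ (b - a) * exp y * y ^ (a - b) :=
        add_le_add head tail
    _ = (2 * K + (2 * b) ^ (b - a)) * exp y * y ^ (a - b) := by ring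

theorem norm_kummerM_term_le {z : ℂ} (hz : 0 < z.re) {b y : ℝ} (hb : 0 < b) (hy : 0 ≤ y)
    (m : ℕ) :
    ‖(∏ j ∈ range m, (z + j)) / (∏ j ∈ range m, ((b : ℂ) + j)) * (y : ℂ) ^ m / (m ! : ℂ)‖
      ≤ Real.Gamma z.re / ‖Complex.Gamma z‖ * (pochhammerRatio z.re b m * (y ^ m / m !)) := by
  have hΓ : 0 < ‖Complex.Gamma z‖ := norm_pos_iff.2 (Complex.Gamma_ne_zero_of_re_pos hz)
  have hQ : ∏ j ∈ range m, ((b : ℂ) + j) = ((∏ j ∈ range m, (b + j) : ℝ) : ℂ) := by push_cast; rfl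
  have hQpos : 0 < ∏ j ∈ range m, (b + j : ℝ) := prod_pos fun j _ => by positivity
  have hP : ‖∏ j ∈ range m, (z + j)‖
      ≤ Real.Gamma z.re * (∏ j ∈ range m, (z.re + j)) / ‖Complex.Gamma z‖ := by
    rw [le_div_iff₀ hΓ, mul_comm]
    exact norm_prod_add_nat_le hz m
  rw [norm_div, norm_mul, norm_div, norm_pow, hQ, Complex.norm_real, Complex.norm_real,
    Complex.norm_natCast, Real.norm_of_nonneg hQpos.le, Real.norm_of_nonneg hy, pochhammerRatio,
    prod_div_distrib]
  calc ‖∏ j ∈ range m, (z + j)‖ / (∏ j ∈ range m, (b + j : ℝ)) * y ^ m / m !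
      ≤ Real.Gamma z.re * (∏ j ∈ range m, (z.re + j)) / ‖Complex.Gamma z‖
          / (∏ j ∈ range m, (b + j : ℝ)) * y ^ m / m ! := by gcongr
    _ = Real.Gamma z.re / ‖Complex.Gamma z‖ * ((∏ j ∈ range m, (z.re + j))
          / (∏ j ∈ range m, (b + j : ℝ)) * (y ^ m / m !)) := by ring

theorem norm_kummerM_le {z : ℂ} (hz : 0 < z.re) {b y : ℝ} (hzb : z.re ≤ b) (hy : 0 ≤ y) :
    ‖kummerM z b y‖ ≤ Real.Gamma z.re / ‖Complex.Gamma z‖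
      * ∑' m, pochhammerRatio z.re b m * (y ^ m / m !) := by
  rw [← tsum_mul_left]
  exact tsum_of_norm_bounded
    ((summable_pochhammerRatio_mul_pow_div_factorial hz.le hzb hy).mul_left _).hasSum
    (norm_kummerM_term_le hz (hz.trans_le hzb) hy)

theorem kummerM_uniform_bound (a b ε : ℝ) (ha : 0 < a) (hb : 2 * a + 1 / 2 < b)
    (hε : 0 < ε) :
    ∃ C : ℝ, 0 < C ∧ ∀ x : ℝ, ∀ y : ℝ, 2 ≤ y →
      ‖kummerM ((a : ℂ) + x * Complex.I) (b : ℂ) (y : ℂ)‖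
        ≤ C * Real.exp y * y ^ (a - b + ε) / ‖Complex.Gamma ((a : ℂ) + x * Complex.I)‖ := by
  obtain ⟨C, hC, hbound⟩ := exists_tsum_pochhammerRatio_mul_le (b := b) ha (by linarith)
  refine ⟨Real.Gamma a * C, mul_pos (Real.Gamma_pos_of_pos ha) hC, fun x y hy => ?_⟩
  set z : ℂ := a + x * Complex.I
  have hz : z.re = a := by simp [z]
  calc ‖kummerM z b y‖
      ≤ Real.Gamma a / ‖Complex.Gamma z‖ * ∑' m, pochhammerRatio a b m * (y ^ m / m !) := by
        simpa only [hz] using norm_kummerM_le (hz ▸ ha) (hz.trans_le (by linarith)) (by linarith)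
    _ ≤ Real.Gamma a / ‖Complex.Gamma z‖ * (C * exp y * y ^ (a - b + ε)) := by
        have hΓa := Real.Gamma_pos_of_pos ha
        gcongr
        refine (hbound y (by linarith)).trans ?_
        gcongr <;> linarith
    _ = Real.Gamma a * C * exp y * y ^ (a - b + ε) / ‖Complex.Gamma z‖ := by ring
end

section
/- For real parameters $a$, $b$ with $2a - b + 1/2 < 0$ and real $r > 1$, the integral $A(r) = \int_{1/r}^\infty e^{-(x-1)^2 r^2} x^{2a - b - 1/2}\,dx$ satisfies $A(r) = O(r^{-1+\varepsilon_1})$ as $r \to \infty$, for every $\varepsilon_1 > 0$. -/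
open MeasureTheory Set Real Filter Asymptotics

/-! Write `c = 2a - b - 1/2 ≤ 0`. On `x ≥ 1/2` the factor `x ^ c` is at most `2 ^ (-c)`; on
`1/r < x < 1/2` it is at most `r ^ (-c)`, but there half of the Gaussian weight
`exp (-(x - 1)² r²)` is at most `exp (-r²/8)`, which absorbs `r ^ (-c)`. Hence the integrand is
dominated by a bounded multiple of `exp (-(r²/2) (x - 1)²)`, whose integral is `√(2π) / r`, so
the integral is `O(r⁻¹)`, a fortiori `O(r ^ (-1 + ε₁))`. -/

theorem isBigO_rpow_rpow_atTop_of_le {s t : ℝ} (hst : s ≤ t) :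
    (fun r : ℝ => r ^ s) =O[atTop] fun r => r ^ t := by
  refine IsBigO.of_bound' ?_
  filter_upwards [eventually_ge_atTop 1] with r hr
  rw [norm_of_nonneg (by positivity), norm_of_nonneg (by positivity)]
  exact rpow_le_rpow_of_exponent_le hr hst

theorem rpow_mul_exp_neg_mul_sq_isBigO_one {b : ℝ} (hb : 0 < b) (s : ℝ) :
    (fun r : ℝ => r ^ s * exp (-b * r ^ 2)) =O[atTop] fun _ => (1 : ℝ) :=
  (rpow_mul_exp_neg_mul_sq_isLittleO_exp_neg hb s).isBigO.trans <|
    (tendsto_exp_atBot.comp <| tendsto_id.const_mul_atTop_of_neg (by norm_num)).isBigO_one ℝ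

theorem integral_exp_neg_mul_sub_sq (b a : ℝ) :
    ∫ x : ℝ, exp (-b * (x - a) ^ 2) = √(π / b) := by
  rw [integral_sub_right_eq_self (fun x => exp (-b * x ^ 2)) a, integral_gaussian]

theorem exp_neg_sub_one_sq_mul_rpow_le {c r x : ℝ} (hc : c ≤ 0) (hr : 0 < r) (hx : 1 / r < x) :
    exp (-(x - 1) ^ 2 * r ^ 2) * x ^ c ≤
      (2 ^ (-c) + r ^ (-c) * exp (-(1 / 8) * r ^ 2)) * exp (-(r ^ 2 / 2) * (x - 1) ^ 2) := by
  have hx₀ : 0 < x := (by positivity : (0 : ℝ) < 1 / r).trans hx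
  set g := exp (-(r ^ 2 / 2) * (x - 1) ^ 2)
  have hg : exp (-(x - 1) ^ 2 * r ^ 2) = g * g := by rw [← exp_add]; ring_nf
  have hxc : 0 ≤ x ^ c := by positivity
  rcases le_or_gt (1 / 2) x with hx₂ | hx₂
  · have hpow : x ^ c ≤ 2 ^ (-c) := by
      calc x ^ c ≤ (1 / 2) ^ c := rpow_le_rpow_of_nonpos (by norm_num) hx₂ hc
        _ = 2 ^ (-c) := by rw [one_div, inv_rpow zero_le_two, rpow_neg zero_le_two]
    have hexp : exp (-(x - 1) ^ 2 * r ^ 2) ≤ g :=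
      exp_le_exp.2 (by nlinarith [sq_nonneg (r * (x - 1))])
    calc exp (-(x - 1) ^ 2 * r ^ 2) * x ^ c ≤ g * 2 ^ (-c) :=
          mul_le_mul hexp hpow hxc (by positivity)
      _ ≤ _ := by rw [mul_comm]; gcongr; simp only [le_add_iff_nonneg_right]; positivity
  · have hpow : x ^ c ≤ r ^ (-c) := by
      calc x ^ c ≤ (1 / r) ^ c := rpow_le_rpow_of_nonpos (by positivity) hx.le hc
        _ = r ^ (-c) := by rw [one_div, inv_rpow hr.le, rpow_neg hr.le]
    have hquarter : 1 / 4 ≤ (x - 1) ^ 2 := by nlinarith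
    have hexp : g ≤ exp (-(1 / 8) * r ^ 2) :=
      exp_le_exp.2 (by nlinarith [mul_le_mul_of_nonneg_left hquarter (sq_nonneg r)])
    calc exp (-(x - 1) ^ 2 * r ^ 2) * x ^ c ≤ (r ^ (-c) * exp (-(1 / 8) * r ^ 2)) * g := by
          rw [hg]
          nlinarith [mul_le_mul hexp hpow hxc (by positivity), exp_pos (-(r ^ 2 / 2) * (x - 1) ^ 2)]
      _ ≤ _ := by gcongr; simp only [le_add_iff_nonneg_left]; positivity

theorem norm_setIntegral_exp_neg_sub_one_sq_mul_rpow_le {c r : ℝ} (hc : c ≤ 0) (hr : 0 < r) :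
    ‖∫ x in Ioi (1 / r), exp (-(x - 1) ^ 2 * r ^ 2) * x ^ c‖ ≤
      (2 ^ (-c) + r ^ (-c) * exp (-(1 / 8) * r ^ 2)) * √(π / (r ^ 2 / 2)) := by
  set K := 2 ^ (-c) + r ^ (-c) * exp (-(1 / 8) * r ^ 2)
  have hint : Integrable fun x : ℝ => K * exp (-(r ^ 2 / 2) * (x - 1) ^ 2) :=
    ((integrable_exp_neg_mul_sq (by positivity)).comp_sub_right 1).const_mul K
  have hdom : ∀ x ∈ Ioi (1 / r),
      ‖exp (-(x - 1) ^ 2 * r ^ 2) * x ^ c‖ ≤ K * exp (-(r ^ 2 / 2) * (x - 1) ^ 2) := by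
    intro x hx
    have hx₀ : 0 < x := (by positivity : (0 : ℝ) < 1 / r).trans hx
    rw [norm_of_nonneg (by positivity)]
    exact exp_neg_sub_one_sq_mul_rpow_le hc hr hx
  calc ‖∫ x in Ioi (1 / r), exp (-(x - 1) ^ 2 * r ^ 2) * x ^ c‖
      ≤ ∫ x in Ioi (1 / r), K * exp (-(r ^ 2 / 2) * (x - 1) ^ 2) :=
        norm_integral_le_of_norm_le hint.integrableOn
          (ae_restrict_of_forall_mem measurableSet_Ioi hdom)
    _ ≤ ∫ x, K * exp (-(r ^ 2 / 2) * (x - 1) ^ 2) :=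
        setIntegral_le_integral hint (Eventually.of_forall fun x => by positivity)
    _ = K * √(π / (r ^ 2 / 2)) := by rw [integral_const_mul, integral_exp_neg_mul_sub_sq]

theorem setIntegral_exp_neg_sub_one_sq_mul_rpow_isBigO {c : ℝ} (hc : c ≤ 0) :
    (fun r : ℝ => ∫ x in Ioi (1 / r), exp (-(x - 1) ^ 2 * r ^ 2) * x ^ c)
      =O[atTop] fun r => r ^ (-1 : ℝ) := by
  have hK : (fun r : ℝ => 2 ^ (-c) + r ^ (-c) * exp (-(1 / 8) * r ^ 2)) =O[atTop]
      fun _ => (1 : ℝ) :=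
    (isBigO_const_const _ one_ne_zero _).add (rpow_mul_exp_neg_mul_sq_isBigO_one (by norm_num) _)
  have hwidth : (fun r : ℝ => √(π / (r ^ 2 / 2))) =O[atTop] fun r => r ^ (-1 : ℝ) := by
    refine ((isBigO_refl (fun r : ℝ => r ^ (-1 : ℝ)) atTop).const_mul_left √(2 * π)).congr'
      ?_ .rfl
    filter_upwards [eventually_gt_atTop 0] with r hr
    rw [rpow_neg_one, ← div_eq_mul_inv, show π / (r ^ 2 / 2) = 2 * π / r ^ 2 by field_simp,
      sqrt_div' _ (sq_nonneg r), sqrt_sq hr.le]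
  refine IsBigO.trans ?_ ((hK.mul hwidth).congr_right fun r => one_mul _)
  refine IsBigO.of_bound' ?_
  filter_upwards [eventually_gt_atTop 0] with r hr
  exact (norm_setIntegral_exp_neg_sub_one_sq_mul_rpow_le hc hr).trans (le_norm_self _)

theorem gaussian_integral_estimate (a b : ℝ) (h : 2 * a - b + 1 / 2 < 0)
    (ε₁ : ℝ) (hε : 0 < ε₁) :
    (fun r : ℝ => ∫ x in Ioi (1 / r), Real.exp (-(x - 1) ^ 2 * r ^ 2) * x ^ (2 * a - b - 1 / 2))
      =O[atTop] fun r : ℝ => r ^ (-1 + ε₁) :=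
  (setIntegral_exp_neg_sub_one_sq_mul_rpow_isBigO (by linarith)).trans
    (isBigO_rpow_rpow_atTop_of_le (by linarith))
end

section
/- Let $k \in \mathbb{Z}$, $n > 0$ real, and let $\varphi: \mathbb{R}_+ \to \mathbb{C}$ be measurable with $\varphi_{2-k}(x) := \varphi(x)x^{1-k}$. If both sides converge absolutely, then $\int_0^\infty \Gamma(1-k, 4\pi n y)\, e^{2\pi n y}\, \varphi(y)\,dy = (4\pi n)^{1-k}\int_0^\infty \frac{(\mathcal{L}\varphi_{2-k})(2\pi n (2t+1))}{(1+t)^k}\,dt$. -/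
/-!
Substituting `s = a (1 + t)` in the incomplete gamma integral gives
`e^{a/2} Γ(1-k, a) = a^{1-k} ∫_0^∞ e^{-a(2t+1)/2} (1+t)^{-k} dt`. With `a = 4πny` the left side
becomes a double integral of `φ(y) y^{1-k} e^{-2πn(2t+1)y} (1+t)^{-k}`. The kernel is
nonnegative, so its absolute integrability is exactly that of the left side, and Fubini applies;
the inner `y`-integral is the Laplace transform of `φ_{2-k}` at `2πn(2t+1)`.
-/

open MeasureTheory Set Real

/-- The upper incomplete gamma function `Γ(a, x) = ∫_x^∞ e^{-t} t^{a-1} dt`. -/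
noncomputable def GammaUpper (a x : ℝ) : ℝ :=
  ∫ t in Ioi x, Real.exp (-t) * t ^ (a - 1)

theorem setIntegral_Ioi_comp_add_right {E : Type*} [NormedAddCommGroup E] [NormedSpace ℝ E]
    (f : ℝ → E) (a c : ℝ) : ∫ t in Ioi a, f (t + c) = ∫ s in Ioi (a + c), f s := by
  have h := (measurePreserving_add_right volume c).setIntegral_preimage_emb
    (measurableEmbedding_addRight c) f (Ioi (a + c))
  rwa [preimage_add_const_Ioi, add_sub_cancel_right] at h

theorem GammaUpper_eq_rpow_mul_integral (s : ℝ) {a : ℝ} (ha : 0 < a) :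
    GammaUpper s a = a ^ s * ∫ t in Ioi 0, exp (-(a * (1 + t))) * (1 + t) ^ (s - 1) := by
  have hsub := integral_comp_mul_left_Ioi' (fun x => exp (-(x + a)) * (x + a) ^ (s - 1)) 0 ha
  rw [mul_zero, setIntegral_Ioi_comp_add_right (fun x => exp (-x) * x ^ (s - 1)), zero_add]
    at hsub
  have hint : ∫ t in Ioi 0, exp (-(a * t + a)) * (a * t + a) ^ (s - 1)
      = a ^ (s - 1) * ∫ t in Ioi 0, exp (-(a * (1 + t))) * (1 + t) ^ (s - 1) := by
    rw [← integral_const_mul]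
    refine setIntegral_congr_fun measurableSet_Ioi fun t ht => ?_
    rw [show a * t + a = a * (1 + t) by ring, mul_rpow ha.le (by linarith [mem_Ioi.mp ht])]
    ring
  rw [GammaUpper, ← hsub, smul_eq_mul, hint, ← mul_assoc, rpow_sub_one ha.ne']
  field_simp

theorem integrableOn_exp_neg_mul_one_add_mul_rpow {a : ℝ} (ha : 0 < a) (p : ℝ) :
    IntegrableOn (fun t => exp (-(a * (1 + t))) * (1 + t) ^ p) (Ioi 0) := by
  refine integrable_of_isBigO_exp_neg (half_pos ha) ?_ ?_
  · refine ContinuousOn.mul (by fun_prop) fun t ht => ?_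
    have : 1 + t ≠ 0 := by linarith [mem_Ici.mp ht]
    exact (continuousAt_const.add continuousAt_id).rpow_const (Or.inl this) |>.continuousWithinAt
  · have hdecay : Filter.Tendsto (fun t : ℝ => (1 + t) ^ p * exp (-(a / 2) * (1 + t)))
        Filter.atTop (nhds 0) :=
      (tendsto_rpow_mul_exp_neg_mul_atTop_nhds_zero p _ (half_pos ha)).comp
        (Filter.tendsto_atTop_add_const_left _ 1 Filter.tendsto_id)
    refine ((hdecay.isBigO_one ℝ).mul
      ((Asymptotics.isBigO_refl (fun t => exp (-(a / 2) * t)) _).const_mul_left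
        (exp (-(a / 2))))).congr (fun t => ?_) (fun t => one_mul _)
    rw [show -(a * (1 + t)) = -(a / 2) + -(a / 2) * t + -(a / 2) * (1 + t) by ring, exp_add,
      exp_add]
    ring

theorem integrable_prod_smul_of_nonneg {α β E : Type*} [MeasurableSpace α] [MeasurableSpace β]
    {μ : Measure α} {ν : Measure β} [SFinite ν] [NormedAddCommGroup E] [NormedSpace ℝ E]
    {K : α → β → ℝ} {g : α → E} (hK : AEStronglyMeasurable (Function.uncurry K) (μ.prod ν))
    (hg : AEStronglyMeasurable g μ) (hK0 : ∀ᵐ x ∂μ, ∀ᵐ y ∂ν, 0 ≤ K x y)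
    (hKx : ∀ᵐ x ∂μ, Integrable (K x) ν) (hint : Integrable (fun x => (∫ y, K x y ∂ν) • g x) μ) :
    Integrable (fun p : α × β => K p.1 p.2 • g p.1) (μ.prod ν) := by
  rw [integrable_prod_iff (f := fun p : α × β => K p.1 p.2 • g p.1)
    (hK.smul (hg.comp_quasiMeasurePreserving Measure.quasiMeasurePreserving_fst))]
  refine ⟨hKx.mono fun x hx => hx.smul_const (g x), hint.norm.congr ?_⟩
  filter_upwards [hK0] with x hx
  have hnorm : ∀ᵐ y ∂ν, ‖K x y • g x‖ = K x y * ‖g x‖ := by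
    filter_upwards [hx] with y hy
    rw [norm_smul, Real.norm_of_nonneg hy]
  rw [integral_congr_ae hnorm, integral_mul_const, norm_smul,
    Real.norm_of_nonneg (integral_nonneg_of_ae hx)]

theorem MeasureTheory.AEStronglyMeasurable.of_mul_cexp {α : Type*} [MeasurableSpace α]
    {μ : Measure α} {f u : α → ℂ} (hf : AEStronglyMeasurable (fun x => f x * Complex.exp (u x)) μ)
    (hu : Measurable u) : AEStronglyMeasurable f μ := by
  refine (hf.mul (hu.neg.cexp.aestronglyMeasurable)).congr (ae_of_all _ fun x => ?_)
  simp only [Pi.mul_apply, Pi.neg_apply, mul_assoc, ← Complex.exp_add, add_neg_cancel,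
    Complex.exp_zero, mul_one]

noncomputable def gammaKernel (n : ℝ) (k : ℤ) (y t : ℝ) : ℝ :=
  exp (-(2 * π * n * (2 * t + 1) * y)) / (1 + t) ^ k

section gammaKernel

variable (k : ℤ) {n y : ℝ}

theorem gammaKernel_eq_exp_mul (t : ℝ) : gammaKernel n k y t =
    exp (2 * π * n * y) * (exp (-(4 * π * n * y * (1 + t))) * (1 + t) ^ ((1 - k : ℝ) - 1)) := by
  rw [gammaKernel, ← mul_assoc, ← exp_add, sub_sub_cancel_left, ← Int.cast_neg, rpow_intCast,
    zpow_neg, ← div_eq_mul_inv]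
  ring_nf

theorem measurable_gammaKernel : Measurable (Function.uncurry (gammaKernel n k)) := by
  unfold gammaKernel Function.uncurry
  fun_prop

theorem gammaKernel_nonneg {t : ℝ} (ht : 0 ≤ 1 + t) : 0 ≤ gammaKernel n k y t :=
  div_nonneg (exp_pos _).le (zpow_nonneg ht k)

theorem integrableOn_gammaKernel (hn : 0 < n) (hy : 0 < y) :
    IntegrableOn (gammaKernel n k y) (Ioi 0) := by
  simp_rw [funext (gammaKernel_eq_exp_mul k)]
  exact (integrableOn_exp_neg_mul_one_add_mul_rpow (by positivity) _).const_mul _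

theorem exp_mul_GammaUpper_eq_integral_gammaKernel (hn : 0 < n) (hy : 0 < y) :
    exp (2 * π * n * y) * GammaUpper (1 - k) (4 * π * n * y)
      = (4 * π * n) ^ (1 - k) * y ^ (1 - k : ℝ) * ∫ t in Ioi 0, gammaKernel n k y t := by
  simp_rw [gammaKernel_eq_exp_mul, integral_const_mul,
    GammaUpper_eq_rpow_mul_integral _ (by positivity : 0 < 4 * π * n * y),
    mul_rpow (by positivity : 0 ≤ 4 * π * n) hy.le]
  have hpow : (4 * π * n) ^ (1 - k : ℝ) = (4 * π * n) ^ (1 - k) := by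
    exact_mod_cast rpow_intCast (4 * π * n) (1 - k)
  rw [hpow]
  ring

theorem GammaUpper_mul_cexp_eq_integral_gammaKernel (hn : 0 < n) (hy : 0 < y) :
    (GammaUpper (1 - k) (4 * π * n * y) : ℂ) * Complex.exp ↑(2 * π * n * y)
      = ↑((4 * π * n) ^ (1 - k)) * (y : ℂ) ^ ((1 : ℂ) - k)
        * ↑(∫ t in Ioi 0, gammaKernel n k y t) := by
  have h := congrArg Complex.ofReal (exp_mul_GammaUpper_eq_integral_gammaKernel k hn hy)
  push_cast [Complex.ofReal_cpow hy.le] at h ⊢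
  linear_combination h

theorem integral_gammaKernel_smul {μ : Measure ℝ} (ψ : ℝ → ℂ) (t : ℝ) :
    ∫ y, gammaKernel n k y t • ψ y ∂μ
      = (∫ x, ψ x * Complex.exp ↑(-(2 * π * n * (2 * t + 1) * x)) ∂μ) / ((1 + t : ℝ) : ℂ) ^ k := by
  rw [← integral_div]
  congr 1 with y
  simp only [gammaKernel, Complex.real_smul]
  push_cast
  ring

end gammaKernel

theorem nonholomorphic_part_identity_general (k : ℤ) (n : ℝ) (hn : 0 < n) (φ : ℝ → ℂ)
    (hLHS : IntegrableOn (fun y : ℝ =>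
      (GammaUpper (1 - k) (4 * π * n * y) : ℂ) * Complex.exp (↑(2 * π * n * y)) * φ y)
      (Ioi 0))
    (hinner : ∀ t : ℝ, 0 ≤ t → IntegrableOn (fun x : ℝ =>
      φ x * (x : ℂ) ^ ((1 : ℂ) - (k : ℂ)) * Complex.exp (↑(-(2 * π * n * (2 * t + 1) * x))))
      (Ioi 0)) :
    ∫ y in Ioi (0 : ℝ),
        (GammaUpper (1 - k) (4 * π * n * y) : ℂ) * Complex.exp (↑(2 * π * n * y)) * φ y
      = ↑((4 * π * n) ^ (1 - k)) *
        ∫ t in Ioi (0 : ℝ),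
          (∫ x in Ioi (0 : ℝ),
              φ x * (x : ℂ) ^ ((1 : ℂ) - (k : ℂ))
                * Complex.exp (↑(-(2 * π * n * (2 * t + 1) * x))))
            / ((1 + t : ℝ) : ℂ) ^ k := by
  set C : ℂ := ↑((4 * π * n) ^ (1 - k))
  set g : ℝ → ℂ := fun y => φ y * (y : ℂ) ^ ((1 : ℂ) - (k : ℂ))
  have hC : C ≠ 0 := Complex.ofReal_ne_zero.mpr (zpow_pos (by positivity) _).ne'
  have hLHS_eq : ∀ y ∈ Ioi (0 : ℝ),
      (GammaUpper (1 - k) (4 * π * n * y) : ℂ) * Complex.exp (↑(2 * π * n * y)) * φ y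
        = C * (∫ t in Ioi 0, gammaKernel n k y t) • g y := fun y hy => by
    rw [GammaUpper_mul_cexp_eq_integral_gammaKernel k hn hy, Complex.real_smul]
    ring
  have hF : Integrable (Function.uncurry fun y t => gammaKernel n k y t • g y)
      ((volume.restrict (Ioi 0)).prod (volume.restrict (Ioi 0))) := by
    refine integrable_prod_smul_of_nonneg (measurable_gammaKernel k).aestronglyMeasurable
      ((hinner 0 le_rfl).aestronglyMeasurable.of_mul_cexp (by fun_prop))
      (ae_of_all _ fun y => ae_restrict_of_forall_mem measurableSet_Ioi fun t ht =>
        gammaKernel_nonneg k (by linarith [mem_Ioi.mp ht]))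
      (ae_restrict_of_forall_mem measurableSet_Ioi fun y hy => integrableOn_gammaKernel k hn hy)
      ((hLHS.const_mul C⁻¹).congr (ae_restrict_of_forall_mem measurableSet_Ioi fun y hy => ?_))
    simp only [hLHS_eq y hy, inv_mul_cancel_left₀ hC]
  calc _ = ∫ y in Ioi 0, C * ∫ t in Ioi 0, gammaKernel n k y t • g y := by
        refine setIntegral_congr_fun measurableSet_Ioi fun y hy => ?_
        rw [hLHS_eq y hy, integral_smul_const]
    _ = _ := by
        simp_rw [integral_const_mul, integral_integral_swap hF, integral_gammaKernel_smul, g]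

/-- Identity (4.14) of Diamantis–Lee–Raji–Rolen relating the incomplete-gamma weighted
integral of `φ` to an integral of the Laplace transform of `φ_{2-k}`. -/
theorem nonholomorphic_part_identity (k : ℤ) (n : ℝ) (hn : 0 < n) (φ : ℝ → ℂ)
    (hLHS : IntegrableOn (fun y : ℝ =>
      (GammaUpper (1 - k) (4 * π * n * y) : ℂ) * Complex.exp (↑(2 * π * n * y)) * φ y)
      (Ioi 0))
    (hinner : ∀ t : ℝ, 0 ≤ t → IntegrableOn (fun x : ℝ =>
      φ x * (x : ℂ) ^ ((1 : ℂ) - (k : ℂ)) * Complex.exp (↑(-(2 * π * n * (2 * t + 1) * x))))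
      (Ioi 0))
    (hRHS : IntegrableOn (fun t : ℝ =>
      (∫ x in Ioi (0 : ℝ),
          φ x * (x : ℂ) ^ ((1 : ℂ) - (k : ℂ)) * Complex.exp (↑(-(2 * π * n * (2 * t + 1) * x))))
        / ((1 + t : ℝ) : ℂ) ^ k) (Ioi 0)) :
    ∫ y in Ioi (0 : ℝ),
        (GammaUpper (1 - k) (4 * π * n * y) : ℂ) * Complex.exp (↑(2 * π * n * y)) * φ y
      = ↑((4 * π * n) ^ (1 - k)) *
        ∫ t in Ioi (0 : ℝ),
          (∫ x in Ioi (0 : ℝ),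
              φ x * (x : ℂ) ^ ((1 : ℂ) - (k : ℂ))
                * Complex.exp (↑(-(2 * π * n * (2 * t + 1) * x))))
            / ((1 + t : ℝ) : ℂ) ^ k :=
  nonholomorphic_part_identity_general k n hn φ hLHS hinner
end
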